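/- (Geometric-weighted convolution bound) Let 0 < α < 1, λ = (1+α)/2, and suppose 0 ≤ ρ < λ. Then for all n ≥ 3, Σ_{j=2}^{n-1} ρ^j a_{n-j}^{(-α)} ≤ (4ρ²/((1+α)(1+α-2ρ))) a_n^{(-α)}, where a_n^{(-α)} = Γ(n+α)/(Γ(α)Γ(n+1)). -/

import Mathlib

/-- Taylor coefficients of `(1-z)^{-α}`: `a_n^{(-α)} = Γ(n+α)/(Γ(α)Γ(n+1))`. -/
noncomputable def aNeg (α : ℝ) (n : ℕ) : ℝ :=
  Real.Gamma (n + α) / (Real.Gamma α * (n.factorial : ℝ))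

lemma aNeg_pos {α : ℝ} (hα : 0 < α) (n : ℕ) : 0 < aNeg α n := by
  unfold aNeg
  apply div_pos (Real.Gamma_pos_of_pos (by positivity))
  exact mul_pos (Real.Gamma_pos_of_pos hα) (by positivity)

lemma aNeg_succ {α : ℝ} (hα : 0 < α) (m : ℕ) :
    aNeg α (m + 1) = (((m : ℝ) + α) / ((m : ℝ) + 1)) * aNeg α m := by
  unfold aNeg
  rw [Nat.factorial_succ]
  push_cast
  rw [show ((m : ℝ) + 1) + α = ((m : ℝ) + α) + 1 by ring,
    Real.Gamma_add_one (by positivity)]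
  have h1 : Real.Gamma α ≠ 0 := (Real.Gamma_pos_of_pos hα).ne'
  have h2 : ((m : ℝ) + 1) ≠ 0 := by positivity
  have h3 : ((m.factorial : ℝ)) ≠ 0 := by positivity
  field_simp

lemma aNeg_step {α : ℝ} (hα : 0 < α) (hα1 : α < 1) {m : ℕ} (hm : 1 ≤ m) :
    (1 + α) / 2 * aNeg α m ≤ aNeg α (m + 1) := by
  rw [aNeg_succ hα]
  apply mul_le_mul_of_nonneg_right _ (aNeg_pos hα m).le
  have hm' : (1 : ℝ) ≤ (m : ℝ) := by exact_mod_cast hm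
  rw [div_le_div_iff₀ (by norm_num) (by positivity)]
  nlinarith

lemma aNeg_pow {α : ℝ} (hα : 0 < α) (hα1 : α < 1) {m : ℕ} (hm : 1 ≤ m) (k : ℕ) :
    ((1 + α) / 2) ^ k * aNeg α m ≤ aNeg α (m + k) := by
  induction k with
  | zero => simp
  | succ k ih =>
      have hLam : (0 : ℝ) < (1 + α) / 2 := by linarith
      calc ((1 + α) / 2) ^ (k + 1) * aNeg α m
          = (1 + α) / 2 * (((1 + α) / 2) ^ k * aNeg α m) := by ring
        _ ≤ (1 + α) / 2 * aNeg α (m + k) := by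
            exact mul_le_mul_of_nonneg_left ih hLam.le
        _ ≤ aNeg α (m + k + 1) := aNeg_step hα hα1 (by omega)

theorem stmt17 (α ρ : ℝ) (hα : 0 < α) (hα1 : α < 1) (hρ0 : 0 ≤ ρ)
    (hρ : ρ < (1 + α) / 2) (n : ℕ) (hn : 3 ≤ n) :
    ∑ j ∈ Finset.Icc 2 (n - 1), ρ ^ j * aNeg α (n - j)
      ≤ (4 * ρ ^ 2 / ((1 + α) * (1 + α - 2 * ρ))) * aNeg α n := by
  set L : ℝ := (1 + α) / 2 with hL
  have hLpos : 0 < L := by rw [hL]; linarith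
  set r : ℝ := ρ / L with hr
  have hr0 : 0 ≤ r := div_nonneg hρ0 hLpos.le
  have hr1 : r < 1 := (div_lt_one hLpos).mpr hρ
  have hρeq : ρ = r * L := by rw [hr, div_mul_cancel₀ ρ hLpos.ne']
  have han : 0 < aNeg α n := aNeg_pos hα n
  -- termwise bound
  have hterm : ∀ j ∈ Finset.Icc 2 (n - 1),
      ρ ^ j * aNeg α (n - j) ≤ r ^ j * aNeg α n := by
    intro j hj
    rw [Finset.mem_Icc] at hj
    have hj1 : 1 ≤ n - j := by omega
    have hnj : (n - j) + j = n := by omega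
    have key := aNeg_pow hα hα1 hj1 j
    rw [hnj] at key
    calc ρ ^ j * aNeg α (n - j) = r ^ j * (L ^ j * aNeg α (n - j)) := by
          rw [hρeq, mul_pow]; ring
      _ ≤ r ^ j * aNeg α n :=
          mul_le_mul_of_nonneg_left key (pow_nonneg hr0 j)
  have h1 : ∑ j ∈ Finset.Icc 2 (n - 1), ρ ^ j * aNeg α (n - j)
      ≤ (∑ j ∈ Finset.Icc 2 (n - 1), r ^ j) * aNeg α n := by
    rw [Finset.sum_mul]
    exact Finset.sum_le_sum hterm
  -- geometric sum bound
  have h2 : ∑ j ∈ Finset.Icc 2 (n - 1), r ^ j ≤ r ^ 2 * (1 - r)⁻¹ := by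
    have hIcc : Finset.Icc 2 (n - 1) = Finset.Ico 2 n := by
      rw [← Finset.Ico_add_one_right_eq_Icc]
      congr 1
      omega
    have hre : ∑ j ∈ Finset.Icc 2 (n - 1), r ^ j
        = r ^ 2 * ∑ j ∈ Finset.range (n - 2), r ^ j := by
      rw [hIcc, Finset.sum_Ico_eq_sum_range, Finset.mul_sum]
      exact Finset.sum_congr rfl fun i _ => by ring
    rw [hre]
    apply mul_le_mul_of_nonneg_left _ (by positivity)
    exact sum_le_hasSum _ (fun i _ => pow_nonneg hr0 i)
      (hasSum_geometric_of_lt_one hr0 hr1)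
  -- final algebra
  have heq : r ^ 2 * (1 - r)⁻¹ = 4 * ρ ^ 2 / ((1 + α) * (1 + α - 2 * ρ)) := by
    have hαne : (1 + α) ≠ 0 := by positivity
    have hd : 1 + α - 2 * ρ > 0 := by rw [hL] at hρ; linarith
    have h1r : 1 - r = (1 + α - 2 * ρ) / (1 + α) := by
      rw [hr, hL]; field_simp
    rw [h1r, hr, hL]
    field_simp
    ring
  calc ∑ j ∈ Finset.Icc 2 (n - 1), ρ ^ j * aNeg α (n - j)
      ≤ (∑ j ∈ Finset.Icc 2 (n - 1), r ^ j) * aNeg α n := h1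
    _ ≤ (r ^ 2 * (1 - r)⁻¹) * aNeg α n :=
        mul_le_mul_of_nonneg_right h2 han.le
    _ = (4 * ρ ^ 2 / ((1 + α) * (1 + α - 2 * ρ))) * aNeg α n := by rw [heq]
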